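/- Let θ₂ and θ₂' be two 2-truncated expansions of π (with the same subspace I₂). Then: (i) the map π → W, g ↦ θ₂'(g) − θ₂(g), is a group homomorphism, and there is a unique ℝ-linear map F : H → W with F([g]) = θ₂'(g) − θ₂(g) for all g ∈ π; (ii) for every φ ∈ Aut(π) with (|φ| ⊗ |φ|)(I₂) ⊆ I₂ and (|φ⁻¹| ⊗ |φ⁻¹|)(I₂) ⊆ I₂, one has τ₁^θ(φ) − τ₁^{θ'}(φ) = |φ|_W ∘ F ∘ |φ|⁻¹ − F. Hence the two cocycles τ₁^θ and τ₁^{θ'} differ by the coboundary of F, so their cohomology classes in the first group cohomology of the I₂-preserving automorphisms with coefficients in Hom_ℝ(H, W) coincide. (Second assertion of the paper's Proposition 2.4, in truncated form.) -/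

import Mathlib

open scoped TensorProduct

/-- `H := ℝ ⊗_ℤ π^ab`. -/
abbrev HH (π : Type*) [Group π] := TensorProduct ℤ ℝ (Additive (Abelianization π))

/-- `[g] := 1 ⊗ (class of g) ∈ H`. -/
noncomputable def cl {π : Type*} [Group π] (g : π) : HH π :=
  (1 : ℝ) ⊗ₜ[ℤ] (Additive.ofMul (Abelianization.of g))

/-- `|φ| : H → H`, the `ℝ`-linear map induced by `φ ∈ Aut(π)`. -/
noncomputable def indH {π : Type*} [Group π] (φ : MulAut π) : HH π →ₗ[ℝ] HH π :=
  LinearMap.baseChange ℝ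
    ((MonoidHom.toAdditive (Abelianization.map φ.toMonoidHom)).toIntLinearMap)

/-- `|φ|_W : W → W`, the map induced by `|φ| ⊗ |φ|` on `W = (H ⊗_ℝ H) ⧸ I₂`, given that
`(|φ| ⊗ |φ|)(I₂) ⊆ I₂`. -/
noncomputable def indW {π : Type*} [Group π] (I₂ : Submodule ℝ (HH π ⊗[ℝ] HH π))
    (φ : MulAut π)
    (hφ : Submodule.map (TensorProduct.map (indH φ) (indH φ)) I₂ ≤ I₂) :
    ((HH π ⊗[ℝ] HH π) ⧸ I₂) →ₗ[ℝ] ((HH π ⊗[ℝ] HH π) ⧸ I₂) :=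
  Submodule.mapQ I₂ I₂ (TensorProduct.map (indH φ) (indH φ))
    (Submodule.map_le_iff_le_comap.mp hφ)

def IsTruncatedExpansion {π : Type*} [Group π] (I₂ : Submodule ℝ (HH π ⊗[ℝ] HH π))
    (θ₂ : π → (HH π ⊗[ℝ] HH π) ⧸ I₂) : Prop :=
  ∀ g h : π, θ₂ (g * h) = θ₂ g + θ₂ h + I₂.mkQ (cl g ⊗ₜ[ℝ] cl h)

theorem indH_cl {π : Type*} [Group π] (φ : MulAut π) (g : π) : indH φ (cl g) = cl (φ g) := rfl

namespace HH

variable {π : Type*} [Group π] {N : Type*} [AddCommGroup N] [Module ℝ N]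

theorem linearMap_ext {F₁ F₂ : HH π →ₗ[ℝ] N} (h : ∀ g : π, F₁ (cl g) = F₂ (cl g)) :
    F₁ = F₂ := by
  refine TensorProduct.AlgebraTensorModule.ext fun r x ↦ ?_
  induction x using Additive.rec with | _ x => ?_
  obtain ⟨g, rfl⟩ : ∃ g, Abelianization.of g = x := QuotientGroup.mk_surjective x
  have hr : (r ⊗ₜ[ℤ] Additive.ofMul (Abelianization.of g) : HH π) = r • cl g := by
    rw [cl, TensorProduct.smul_tmul', smul_eq_mul, mul_one]
  rw [hr, map_smul, map_smul, h g]

noncomputable def lift (δ : π →* Multiplicative N) : HH π →ₗ[ℝ] N :=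
  LinearMap.liftBaseChange ℝ (MonoidHom.toAdditiveLeft (Abelianization.lift δ)).toIntLinearMap

theorem lift_cl (δ : π →* Multiplicative N) (g : π) : lift δ (cl g) = (δ g).toAdd := by
  rw [lift, cl, LinearMap.liftBaseChange_tmul, one_smul]
  rfl

theorem existsUnique_linearMap_cl {δ : π → N} (hδ : ∀ g h, δ (g * h) = δ g + δ h) :
    ∃! F : HH π →ₗ[ℝ] N, ∀ g : π, F (cl g) = δ g := by
  let δ' : π →* Multiplicative N := MonoidHom.mk' (fun g ↦ .ofAdd (δ g)) fun g h ↦ by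
    simp only [hδ, ofAdd_add]
  exact ⟨lift δ', lift_cl δ', fun F hF ↦ linearMap_ext fun g ↦ (hF g).trans (lift_cl δ' g).symm⟩

end HH

theorem IsTruncatedExpansion.sub_map_mul {π : Type*} [Group π]
    {I₂ : Submodule ℝ (HH π ⊗[ℝ] HH π)} {θ₂ θ₂' : π → (HH π ⊗[ℝ] HH π) ⧸ I₂}
    (hθ : IsTruncatedExpansion I₂ θ₂) (hθ' : IsTruncatedExpansion I₂ θ₂') (g h : π) :
    θ₂' (g * h) - θ₂ (g * h) = (θ₂' g - θ₂ g) + (θ₂' h - θ₂ h) := by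
  rw [hθ, hθ']
  abel

/-- Let `θ₂, θ₂'` be two 2-truncated expansions of `π` (with the same `I₂`).
(i) `g ↦ θ₂' g − θ₂ g` is a group homomorphism into the additive group of `W`, and there is
a unique `ℝ`-linear map `F : H → W` with `F [g] = θ₂' g − θ₂ g` for all `g`;
(ii) for every `I₂`-preserving `φ ∈ Aut(π)` (with `φ⁻¹` also `I₂`-preserving),
`τ₁^θ(φ) − τ₁^{θ'}(φ) = |φ|_W ∘ F ∘ |φ|⁻¹ − F`, i.e. the two cocycles differ by the
coboundary of `F`. -/
theorem statement10 {π : Type*} [Group π] (I₂ : Submodule ℝ (HH π ⊗[ℝ] HH π))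
    (θ₂ θ₂' : π → (HH π ⊗[ℝ] HH π) ⧸ I₂)
    (hθ : ∀ g h : π, θ₂ (g * h) = θ₂ g + θ₂ h + I₂.mkQ (cl g ⊗ₜ[ℝ] cl h))
    (hθ' : ∀ g h : π, θ₂' (g * h) = θ₂' g + θ₂' h + I₂.mkQ (cl g ⊗ₜ[ℝ] cl h)) :
    (∀ g h : π, θ₂' (g * h) - θ₂ (g * h) = (θ₂' g - θ₂ g) + (θ₂' h - θ₂ h)) ∧
    (∃! F : HH π →ₗ[ℝ] ((HH π ⊗[ℝ] HH π) ⧸ I₂), ∀ g : π, F (cl g) = θ₂' g - θ₂ g) ∧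
    (∀ (φ : MulAut π)
      (hφ : Submodule.map (TensorProduct.map (indH φ) (indH φ)) I₂ ≤ I₂),
      Submodule.map (TensorProduct.map (indH φ⁻¹) (indH φ⁻¹)) I₂ ≤ I₂ →
      ∀ F τφ τ'φ : HH π →ₗ[ℝ] ((HH π ⊗[ℝ] HH π) ⧸ I₂),
        (∀ g : π, F (cl g) = θ₂' g - θ₂ g) →
        (∀ g : π, τφ (cl g) = θ₂ g - indW I₂ φ hφ (θ₂ (φ⁻¹ g))) →
        (∀ g : π, τ'φ (cl g) = θ₂' g - indW I₂ φ hφ (θ₂' (φ⁻¹ g))) →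
        τφ - τ'φ = (indW I₂ φ hφ).comp (F.comp (indH φ⁻¹)) - F) := by
  have hdiff := IsTruncatedExpansion.sub_map_mul hθ hθ'
  refine ⟨hdiff, HH.existsUnique_linearMap_cl hdiff, ?_⟩
  intro φ hφ _ F τφ τ'φ hF hτ hτ'
  refine HH.linearMap_ext fun g ↦ ?_
  simp only [LinearMap.sub_apply, LinearMap.comp_apply, indH_cl, hτ, hτ', hF, map_sub]
  abel
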